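/- Let X be a real-valued square-integrable random variable with mean μ and variance ν. Then for all real numbers β and θ, E[ exp( −ψ( β·(X − θ) ) ) ] ≤ exp( −β·(μ − θ) + (β²/2)·(ν + (μ − θ)²) ). -/

import Mathlib

open MeasureTheory ProbabilityTheory

/-- The Catoni influence function `ψ(x) = log(1 + x + x²/2)`. -/
noncomputable def psi (x : ℝ) : ℝ := Real.log (1 + x + x ^ 2 / 2)

lemma one_add_add_sq_div_two_pos (y : ℝ) : 0 < 1 + y + y ^ 2 / 2 := by
  nlinarith [sq_nonneg (y + 1)]

lemma continuous_psi : Continuous psi :=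
  Continuous.log (by fun_prop) fun y => (one_add_add_sq_div_two_pos y).ne'

-- `(1 + y + y²/2)(1 - y + y²/2) = 1 + y⁴/4 ≥ 1`.
lemma exp_neg_psi_le (y : ℝ) : Real.exp (-psi y) ≤ 1 - y + y ^ 2 / 2 := by
  have hpos := one_add_add_sq_div_two_pos y
  rw [psi, Real.exp_neg, Real.exp_log hpos, inv_le_iff_one_le_mul₀ hpos]
  nlinarith [sq_nonneg (y ^ 2)]

section

variable {Ω : Type*} [MeasurableSpace Ω] {P : Measure Ω} {Y : Ω → ℝ}

lemma integral_sq_eq_variance_add_sq [IsProbabilityMeasure P] (hY : MemLp Y 2 P) :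
    ∫ ω, Y ω ^ 2 ∂P = variance Y P + (∫ ω, Y ω ∂P) ^ 2 := by
  rw [variance_eq_sub hY]
  simp only [Pi.pow_apply]
  ring

lemma integral_one_sub_add_sq_div_two [IsProbabilityMeasure P] (hY : MemLp Y 2 P) :
    ∫ ω, (1 - Y ω + Y ω ^ 2 / 2) ∂P = 1 - ∫ ω, Y ω ∂P + (∫ ω, Y ω ^ 2 ∂P) / 2 := by
  have hY1 : Integrable Y P := hY.integrable one_le_two
  have hlin : Integrable (fun ω => 1 - Y ω) P := (integrable_const 1).sub hY1
  rw [integral_add hlin (hY.integrable_sq.div_const 2),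
    integral_sub (integrable_const 1) hY1, integral_const, integral_div]
  simp

lemma integral_exp_neg_psi_le [IsProbabilityMeasure P] (hY : MemLp Y 2 P) :
    ∫ ω, Real.exp (-psi (Y ω)) ∂P ≤ 1 - ∫ ω, Y ω ∂P + (∫ ω, Y ω ^ 2 ∂P) / 2 := by
  have hquad : Integrable (fun ω => 1 - Y ω + Y ω ^ 2 / 2) P :=
    ((integrable_const 1).sub (hY.integrable one_le_two)).add (hY.integrable_sq.div_const 2)
  have hmeas : AEStronglyMeasurable (fun ω => Real.exp (-psi (Y ω))) P :=
    (Real.continuous_exp.comp continuous_psi.neg).comp_aestronglyMeasurable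
      hY.aestronglyMeasurable
  have hint : Integrable (fun ω => Real.exp (-psi (Y ω))) P :=
    hquad.mono' hmeas (Filter.Eventually.of_forall fun ω => by
      rw [Real.norm_of_nonneg (Real.exp_pos _).le]
      exact exp_neg_psi_le _)
  rw [← integral_one_sub_add_sq_div_two hY]
  exact integral_mono hint hquad fun ω => exp_neg_psi_le _

end

/-- Lower exponential-moment bound: for a square-integrable real random variable `X`
with mean `μ` and variance `ν`, and any reals `β, θ`,
`E[exp(−ψ(β(X − θ)))] ≤ exp(−β(μ − θ) + (β²/2)(ν + (μ − θ)²))`. -/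
theorem catoni_exp_moment_lower
    {Ω : Type*} [MeasurableSpace Ω] (P : Measure Ω) [IsProbabilityMeasure P]
    (X : Ω → ℝ) (μ ν : ℝ)
    (hX : MemLp X 2 P)
    (hmean : ∫ ω, X ω ∂P = μ)
    (hvar : variance X P = ν)
    (β θ : ℝ) :
    ∫ ω, Real.exp (-psi (β * (X ω - θ))) ∂P ≤
      Real.exp (-(β * (μ - θ)) + β ^ 2 / 2 * (ν + (μ - θ) ^ 2)) := by
  have hY : MemLp (fun ω => β * (X ω - θ)) 2 P := (hX.sub (memLp_const θ)).const_mul β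
  have hmeanY : ∫ ω, β * (X ω - θ) ∂P = β * (μ - θ) := by
    rw [integral_const_mul, integral_sub (hX.integrable one_le_two) (integrable_const θ),
      hmean, integral_const]
    simp
  have hvarY : variance (fun ω => β * (X ω - θ)) P = β ^ 2 * ν := by
    rw [variance_const_mul, variance_sub_const hX.aestronglyMeasurable, hvar]
  calc ∫ ω, Real.exp (-psi (β * (X ω - θ))) ∂P
      ≤ 1 - β * (μ - θ) + (β ^ 2 * ν + (β * (μ - θ)) ^ 2) / 2 := by
        simpa only [integral_sq_eq_variance_add_sq hY, hmeanY, hvarY]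
          using integral_exp_neg_psi_le hY
    _ = -(β * (μ - θ)) + β ^ 2 / 2 * (ν + (μ - θ) ^ 2) + 1 := by ring
    _ ≤ Real.exp (-(β * (μ - θ)) + β ^ 2 / 2 * (ν + (μ - θ) ^ 2)) := Real.add_one_le_exp _
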